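/- For every k > 2 and every n ≥ 0, if p = t[0..2^n - 1] is the prefix of length 2^n of the Thue–Morse word t, then p^k is a simple k-power. -/

import Mathlib

/-- `p^k`: the word `p` concatenated `k` times. -/
def listPow {α : Type*} (p : List α) (k : ℕ) : List α := (List.replicate k p).flatten

/-- A `k`-power is a nonempty word of the form `p^k`. -/
def IsKPower {α : Type*} (k : ℕ) (w : List α) : Prop := ∃ p : List α, p ≠ [] ∧ w = listPow p k

/-- A simple `k`-power: a `k`-power none of whose proper factors is a `k`-power. -/
def SimpleKPower {α : Type*} (k : ℕ) (w : List α) : Prop :=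
  IsKPower k w ∧ ∀ y : List α, y <:+: w → y ≠ w → ¬ IsKPower k y

/-- The Thue–Morse word: `tm n` is the parity of the binary digit sum of `n`
(`false` plays the role of the letter 0). -/
def tm (n : ℕ) : Bool := (Nat.digits 2 n).sum % 2 == 1

/-!
If a proper factor `q^k` of `p^k` (`k ≥ 3`) were a `k`-power, then `|q| < |p| = 2ⁿ` and the
`|p|`-periodic word `p p p ⋯` would contain a window of period `|q|` and length `3|q|`; moving
it by at most `|q|` to a period boundary gives an overlap `a x a x a` inside `p p`. But
`p p = μⁿ(00)` occurs in the Thue–Morse word, which is overlap-free: an even period halves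
under `μ⁻¹`, and an odd period carries the blocks `μ(b)` of a window onto blocks straddling two
`μ`-images, forcing three equal consecutive letters.
-/

variable {α : Type*}

def HasPeriodOn (f : ℕ → α) (m s L : ℕ) : Prop :=
  ∀ j, j + m < L → f (s + j) = f (s + j + m)

namespace HasPeriodOn

variable {f : ℕ → α} {m s L : ℕ}

lemma eq_add (h : HasPeriodOn f m s L) {x : ℕ} (hsx : s ≤ x) (hx : x + m < s + L) :
    f x = f (x + m) := by
  simpa only [Nat.add_sub_cancel' hsx] using h (x - s) (by omega)

lemma shift (h : HasPeriodOn f m s L) {c L' : ℕ} (hc : c + L' ≤ L) :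
    HasPeriodOn f m (s + c) L' := fun j hj => by
  simpa only [add_assoc] using h (c + j) (by omega)

lemma mod_of_periodic {g : ℕ → α} {N : ℕ} (h : HasPeriodOn (fun i => g (i % N)) m s L) :
    HasPeriodOn (fun i => g (i % N)) m (s % N) L := fun j hj => by
  simpa only [add_assoc, Nat.mod_add_mod] using h j hj

lemma exists_overlap_of_periodic {g : ℕ → α} {N : ℕ} (hm : 0 < m) (hmN : m < N)
    (h : HasPeriodOn (fun i => g (i % N)) m s (3 * m)) :
    ∃ r, r + (2 * m + 1) ≤ 2 * N ∧ HasPeriodOn (fun i => g (i % N)) m r (2 * m + 1) := by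
  by_cases hr : s % N + (2 * m + 1) ≤ 2 * N
  · exact ⟨s % N, hr, (h.shift (c := 0) (by omega)).mod_of_periodic⟩
  · have hsN : s % N < N := Nat.mod_lt s (by omega)
    have hboundary : (s + (N - s % N)) % N = 0 := by
      rw [← Nat.add_sub_assoc hsN.le, Nat.add_comm, Nat.add_sub_assoc (Nat.mod_le s N),
        Nat.add_mod_left]
      exact Nat.sub_mod_eq_zero_of_mod_eq (Nat.mod_mod s N).symm
    refine ⟨0, by omega, ?_⟩
    simpa only [hboundary] using (h.shift (c := N - s % N) (by omega)).mod_of_periodic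

end HasPeriodOn

@[simp] lemma tm_zero : tm 0 = false := rfl

theorem tm_add_two_pow_mul {n b : ℕ} (a : ℕ) (hb : b < 2 ^ n) :
    tm (b + 2 ^ n * a) = (tm b ^^ tm a) := by
  rcases Nat.eq_zero_or_pos a with rfl | ha
  · simp
  have hlen : (Nat.digits 2 b).length ≤ n := (Nat.digits_length_le_iff one_lt_two b).2 hb
  obtain ⟨z, rfl⟩ := Nat.exists_eq_add_of_le hlen
  rw [tm, ← Nat.digits_append_zeroes_append_digits one_lt_two ha]
  simp only [List.sum_append, List.sum_replicate, smul_zero, add_zero, tm]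
  rcases Nat.mod_two_eq_zero_or_one (Nat.digits 2 b).sum with h | h <;>
  rcases Nat.mod_two_eq_zero_or_one (Nat.digits 2 a).sum with h' | h' <;> simp [Nat.add_mod, h, h']

lemma tm_two_mul (a : ℕ) : tm (2 * a) = tm a := by
  simpa using tm_add_two_pow_mul (n := 1) a (b := 0) (by norm_num)

lemma tm_two_mul_add_one (a : ℕ) : tm (2 * a + 1) = !tm a := by
  simpa [add_comm, show tm 1 = true from rfl] using
    tm_add_two_pow_mul (n := 1) a (b := 1) (by norm_num)

lemma tm_succ_ne_of_even {x : ℕ} (hx : Even x) : tm (x + 1) ≠ tm x := by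
  obtain ⟨a, rfl⟩ := hx
  simp [← two_mul, tm_two_mul, tm_two_mul_add_one]

lemma tm_not_three_eq (i : ℕ) (h₁ : tm i = tm (i + 1)) (h₂ : tm (i + 1) = tm (i + 2)) : False := by
  rcases Nat.even_or_odd i with hi | hi
  · exact tm_succ_ne_of_even hi h₁.symm
  · exact tm_succ_ne_of_even (x := i + 1) hi.add_one h₂.symm

lemma tm_eq_succ_of_eq_of_eq {a i : ℕ} (h₀ : tm (2 * a) = tm (2 * i + 1))
    (h₁ : tm (2 * a + 1) = tm (2 * (i + 1))) : tm i = tm (i + 1) := by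
  rw [tm_two_mul, tm_two_mul_add_one] at h₀
  rw [tm_two_mul_add_one, tm_two_mul, h₀, Bool.not_not] at h₁
  exact h₁

lemma HasPeriodOn.tm_half {m s : ℕ} (h : HasPeriodOn tm (2 * m) s (2 * (2 * m) + 1)) :
    HasPeriodOn tm m (s / 2) (2 * m + 1) := fun j hj => by
  have hb : s % 2 < 2 ^ 1 := Nat.mod_lt s two_pos
  have := h (2 * j) (by omega)
  rwa [show s + 2 * j = s % 2 + 2 ^ 1 * (s / 2 + j) by omega,
    show s % 2 + 2 ^ 1 * (s / 2 + j) + 2 * m = s % 2 + 2 ^ 1 * (s / 2 + j + m) by ring,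
    tm_add_two_pow_mul _ hb, tm_add_two_pow_mul _ hb, Bool.xor_right_inj] at this

lemma tm_not_hasPeriodOn_odd {m s : ℕ} (hm : Odd m) : ¬ HasPeriodOn tm m s (2 * m + 1) := by
  intro h
  obtain ⟨m, rfl⟩ := hm
  rcases Nat.eq_zero_or_pos m with rfl | hm₀
  · exact tm_not_three_eq s (h 0 (by omega)) (h 1 (by omega))
  by_cases hlong : s % 2 + 3 ≤ 2 * m + 1
  · -- the period moves the two pairs `μ(x)` starting at the first even position `2a` of the
    -- window onto odd positions, which makes `tm` constant on `a + m, a + m + 1, a + m + 2`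
    obtain ⟨a, ha⟩ : ∃ a, 2 * a = s + s % 2 := ⟨(s + 1) / 2, by omega⟩
    have key : ∀ b, a ≤ b → b ≤ a + 1 → tm (b + m) = tm (b + m + 1) := fun b hb₁ hb₂ =>
      tm_eq_succ_of_eq_of_eq (a := b)
        (by simpa only [show 2 * b + (2 * m + 1) = 2 * (b + m) + 1 by ring] using
          h.eq_add (x := 2 * b) (by omega) (by omega))
        (by simpa only [show 2 * b + 1 + (2 * m + 1) = 2 * (b + m + 1) by ring] using
          h.eq_add (x := 2 * b + 1) (by omega) (by omega))
    exact tm_not_three_eq (a + m) (key a le_rfl (by omega))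
      (by simpa only [add_right_comm a 1 m] using key (a + 1) (by omega) le_rfl)
  · -- period 3 from an odd `s`: the pairs `μ(x)` at `s + 1, s + 3, s + 5` make
    -- `tm s, tm (s + 1), tm (s + 2)` pairwise distinct
    obtain rfl : m = 1 := by omega
    have hs : Even (s + 1) := by rw [Nat.even_add_one, Nat.not_even_iff_odd, Nat.odd_iff]; omega
    have e₀ := h 0 (by omega)
    have e₁ := h 1 (by omega)
    have e₂ := h 2 (by omega)
    have e₃ := h 3 (by omega)
    have d₁ := tm_succ_ne_of_even hs
    have d₂ := tm_succ_ne_of_even (hs.add even_two)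
    have d₃ := tm_succ_ne_of_even (hs.add (even_two.add even_two))
    simp only [add_assoc, Nat.reduceAdd, Nat.reduceMul, add_zero] at e₀ e₁ e₂ e₃ d₁ d₂ d₃
    revert e₀ e₁ e₂ e₃ d₁ d₂ d₃
    cases tm s <;> cases tm (s + 1) <;> cases tm (s + 2) <;> simp_all

theorem tm_overlap_free {m : ℕ} (hm : 0 < m) (s : ℕ) : ¬ HasPeriodOn tm m s (2 * m + 1) := by
  induction m using Nat.strong_induction_on generalizing s with
  | _ m ih =>
  rcases Nat.even_or_odd' m with ⟨m, rfl | rfl⟩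
  · exact fun h => ih m (by omega) (by omega) (s / 2) h.tm_half
  · exact tm_not_hasPeriodOn_odd (odd_two_mul_add_one m)

/-- `μⁿ(00)` occurs at position `5 · 2ⁿ`, because `tm 5 = tm 6 = false`. -/
lemma tm_five_mul_two_pow_add {n i : ℕ} (hi : i < 2 * 2 ^ n) :
    tm (5 * 2 ^ n + i) = tm (i % 2 ^ n) := by
  by_cases hin : i < 2 ^ n
  · rw [Nat.mod_eq_of_lt hin, add_comm, mul_comm, tm_add_two_pow_mul 5 hin]
    simp [show tm 5 = false from rfl]
  · have hi' : i - 2 ^ n < 2 ^ n := by omega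
    rw [show 5 * 2 ^ n + i = i - 2 ^ n + 2 ^ n * 6 by omega, tm_add_two_pow_mul 6 hi',
      Nat.mod_eq_sub_mod (by omega), Nat.mod_eq_of_lt hi']
    simp [show tm 6 = false from rfl]

lemma HasPeriodOn.tm_five_mul_two_pow_add {n m r L : ℕ}
    (h : HasPeriodOn (fun i => tm (i % 2 ^ n)) m r L) (hr : r + L ≤ 2 * 2 ^ n) :
    HasPeriodOn tm m (5 * 2 ^ n + r) L := fun j hj => by
  simpa only [add_assoc, ← _root_.tm_five_mul_two_pow_add (by omega : r + j < 2 * 2 ^ n),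
    ← _root_.tm_five_mul_two_pow_add (by omega : r + (j + m) < 2 * 2 ^ n)] using h j hj

lemma listPow_succ (p : List α) (k : ℕ) : listPow p (k + 1) = p ++ listPow p k := by
  simp [listPow, List.replicate_succ]

lemma length_listPow (p : List α) (k : ℕ) : (listPow p k).length = k * p.length := by
  simp [listPow, List.length_flatten, List.sum_replicate]

lemma getElem?_listPow (p : List α) {k i : ℕ} (hi : i < k * p.length) :
    (listPow p k)[i]? = p[i % p.length]? := by
  induction k generalizing i with
  | zero => simp at hi
  | succ k ih =>
    rw [listPow_succ]
    by_cases hip : i < p.length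
    · rw [List.getElem?_append_left hip, Nat.mod_eq_of_lt hip]
    · rw [List.getElem?_append_right (by omega), ih (by rw [add_mul] at hi; omega),
        ← Nat.mod_eq_sub_mod (by omega)]

lemma getElem?_listPow_ofFn {N k i : ℕ} (f : ℕ → α) (hi : i < k * N) :
    (listPow (List.ofFn fun j : Fin N => f j) k)[i]? = some (f (i % N)) := by
  have hN : 0 < N := by rcases Nat.eq_zero_or_pos N with rfl | h <;> simp_all
  rw [getElem?_listPow _ (by simpa using hi), List.length_ofFn, List.getElem?_ofFn,
    dif_pos (Nat.mod_lt i hN)]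

lemma List.IsInfix.hasPeriodOn_of_listPow {q w : List α} {k : ℕ} (h : listPow q k <:+: w) :
    ∃ s, s + k * q.length ≤ w.length ∧
      HasPeriodOn (fun i => w[i]?) q.length s (k * q.length) := by
  obtain ⟨s, hs, hw⟩ := List.infix_iff_getElem?.1 h
  rw [length_listPow] at hs
  have hw' : ∀ j < k * q.length, w[s + j]? = (listPow q k)[j]? := fun j hj => by
    rw [add_comm, hw j (by rwa [length_listPow]), List.getElem?_eq_getElem]
  refine ⟨s, by omega, fun j hj => ?_⟩
  dsimp only
  rw [hw' j (by omega), add_assoc, hw' (j + q.length) hj, getElem?_listPow q (by omega),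
    getElem?_listPow q hj, Nat.add_mod_right]

/-- For every `k > 2` and `n ≥ 0`, if `p` is the prefix of length `2^n` of the
Thue–Morse word, then `p^k` is a simple `k`-power. -/
theorem thueMorse_prefix_pow_simple (k n : ℕ) (hk : 2 < k) :
    SimpleKPower k (listPow (List.ofFn fun i : Fin (2 ^ n) => tm i) k) := by
  set p := List.ofFn fun i : Fin (2 ^ n) => tm i
  have hp : p.length = 2 ^ n := List.length_ofFn
  refine ⟨⟨p, List.ne_nil_of_length_pos (by rw [hp]; positivity), rfl⟩, ?_⟩
  rintro _ hinf hne ⟨q, hq, rfl⟩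
  have hq₀ : 0 < q.length := List.length_pos_iff.2 hq
  have hqp : q.length < 2 ^ n := by
    by_contra! hle
    refine hne (hinf.eq_of_length (le_antisymm hinf.length_le ?_))
    rw [length_listPow, length_listPow, hp]
    exact Nat.mul_le_mul_left k hle
  obtain ⟨s, hs, hper⟩ := hinf.hasPeriodOn_of_listPow
  have hk3 : 3 * q.length ≤ k * q.length := Nat.mul_le_mul_right _ hk
  rw [length_listPow, hp] at hs
  have hper' : HasPeriodOn (fun i => tm (i % 2 ^ n)) q.length s (3 * q.length) := fun j hj => by
    simpa only [p, getElem?_listPow_ofFn tm (by omega : s + j < k * 2 ^ n),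
      getElem?_listPow_ofFn tm (by omega : s + j + q.length < k * 2 ^ n), Option.some.injEq]
      using hper j (by omega)
  obtain ⟨r, hr, hover⟩ := hper'.exists_overlap_of_periodic hq₀ hqp
  exact tm_overlap_free hq₀ _ (hover.tm_five_mul_two_pow_add hr)
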